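/- arXiv:2009.09612 — 2 statements merged into one kernel-verified Lean document; each statement's English description precedes it below -/
import Mathlib

section
/- Let μ be a finite measure on a normed space X and fix x, y, ε. For two classifiers f¹, f², μ(B_insecure(x, y, f^en, ε)) ≤ μ(B_insecure(x, y, f¹, ε)) + μ(B_insecure(x, y, f², ε)) − μ(S₀₀), where S₀₀ = B_insecure(x, y, f¹, ε) ∩ B_insecure(x, y, f², ε) and f^en = (1/2)f¹ + (1/2)f². -/
def ballSet {X : Type*} [NormedAddCommGroup X] [NormedSpace ℝ X] (x : X) (ε : ℝ) : Set X :=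
  {x' | ‖x' - x‖ ≤ ε}

def Bsecure {X : Type*} [NormedAddCommGroup X] [NormedSpace ℝ X] {M : ℕ}
    (x : X) (y : Fin M) (f : X → Fin M → ℝ) (ε : ℝ) : Set X :=
  {x' | ‖x' - x‖ ≤ ε ∧ ∀ j, f x' y ≥ f x' j}

def Binsecure {X : Type*} [NormedAddCommGroup X] [NormedSpace ℝ X] {M : ℕ}
    (x : X) (y : Fin M) (f : X → Fin M → ℝ) (ε : ℝ) : Set X :=
  ballSet x ε \ Bsecure x y f ε

/-!
A point of the ball where both members predict `y` is one where every nonnegative combination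
of their scores also ranks `y` first, so the ensemble's insecure set lies in the union of the
members' insecure sets. Inclusion–exclusion for that union gives the bound.
-/

namespace MeasureTheory

theorem measure_le_add_sub_inter_of_subset_union {α : Type*} [MeasurableSpace α]
    {μ : Measure α} {s t u : Set α} (hs : s ⊆ t ∪ u) (hu : NullMeasurableSet u μ)
    (htu : μ (t ∩ u) ≠ ⊤) :
    μ s ≤ μ t + μ u - μ (t ∩ u) := by
  refine ENNReal.le_sub_of_add_le_right htu ?_
  calc μ s + μ (t ∩ u) ≤ μ (t ∪ u) + μ (t ∩ u) := by gcongr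
    _ = μ t + μ u := measure_union_add_inter₀ t hu

end MeasureTheory

section Ensemble

variable {X : Type*} [NormedAddCommGroup X] [NormedSpace ℝ X] {M : ℕ}
  {f1 f2 f : X → Fin M → ℝ} {a b : ℝ} {x : X} {y : Fin M} {ε : ℝ}

theorem Bsecure_inter_subset_of_nonneg_combination (ha : 0 ≤ a) (hb : 0 ≤ b)
    (hf : ∀ x j, f x j = a * f1 x j + b * f2 x j) :
    Bsecure x y f1 ε ∩ Bsecure x y f2 ε ⊆ Bsecure x y f ε := by
  rintro x' ⟨⟨hball, hy1⟩, -, hy2⟩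
  refine ⟨hball, fun j => ?_⟩
  rw [hf, hf]
  have := mul_le_mul_of_nonneg_left (hy1 j) ha
  have := mul_le_mul_of_nonneg_left (hy2 j) hb
  linarith

theorem Binsecure_subset_union_of_nonneg_combination (ha : 0 ≤ a) (hb : 0 ≤ b)
    (hf : ∀ x j, f x j = a * f1 x j + b * f2 x j) :
    Binsecure x y f ε ⊆ Binsecure x y f1 ε ∪ Binsecure x y f2 ε := by
  rintro x' ⟨hball, hinsecure⟩
  by_contra hsecure
  simp only [Set.mem_union, Binsecure, Set.mem_sdiff, hball, true_and, not_or, not_not]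
    at hsecure
  exact hinsecure (Bsecure_inter_subset_of_nonneg_combination ha hb hf hsecure)

end Ensemble

open MeasureTheory in
theorem measure_ensemble_insecure_le_general {X : Type*} [NormedAddCommGroup X]
    [NormedSpace ℝ X] [MeasurableSpace X] (μ : Measure X) [IsFiniteMeasure μ]
    {M : ℕ} (f1 f2 fen : X → Fin M → ℝ)
    (hfen : ∀ x j, fen x j = (1/2) * f1 x j + (1/2) * f2 x j)
    (x : X) (y : Fin M) (ε : ℝ)
    (h2 : MeasurableSet (Binsecure x y f2 ε)) :
    μ (Binsecure x y fen ε) ≤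
      μ (Binsecure x y f1 ε) + μ (Binsecure x y f2 ε)
        - μ (Binsecure x y f1 ε ∩ Binsecure x y f2 ε) :=
  measure_le_add_sub_inter_of_subset_union
    (Binsecure_subset_union_of_nonneg_combination (by norm_num) (by norm_num) hfen)
    h2.nullMeasurableSet (measure_ne_top μ _)

open MeasureTheory in
theorem measure_ensemble_insecure_le {X : Type*} [NormedAddCommGroup X]
    [NormedSpace ℝ X] [MeasurableSpace X] (μ : Measure X) [IsFiniteMeasure μ]
    {M : ℕ} (f1 f2 fen : X → Fin M → ℝ)
    (hfen : ∀ x j, fen x j = (1/2) * f1 x j + (1/2) * f2 x j)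
    (x : X) (y : Fin M) (ε : ℝ)
    (h1 : MeasurableSet (Binsecure x y f1 ε))
    (h2 : MeasurableSet (Binsecure x y f2 ε)) :
    μ (Binsecure x y fen ε) ≤
      μ (Binsecure x y f1 ε) + μ (Binsecure x y f2 ε)
        - μ (Binsecure x y f1 ε ∩ Binsecure x y f2 ε) :=
  measure_ensemble_insecure_le_general μ f1 f2 fen hfen x y ε h2
end

section
/- Let f¹, …, f^N : X → (Fin M → ℝ) and f^en their average. Fix a point x' in the ball B(x, ε). If the number of members for which x' is insecure is k, and every member for which x' is secure has margin f^n_y(x') − f^n_j(x') ≥ δ for all j ≠ y, while every member for which x' is insecure has bounded deficit f^n_j(x') − f^n_y(x') ≤ C for all j, and (N − k)·δ ≥ k·C, then x' ∈ B_secure(x, y, f^en, ε). -/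
open Finset

theorem Finset.card_filter_mul_sub_card_filter_not_mul_le_sum {ι : Type*} (s : Finset ι)
    (p : ι → Prop) [DecidablePred p] {g : ι → ℝ} {δ C : ℝ}
    (hp : ∀ i ∈ s, p i → δ ≤ g i) (hnp : ∀ i ∈ s, ¬ p i → -C ≤ g i) :
    #(s.filter p) * δ - #(s.filter (¬ p ·)) * C ≤ ∑ i ∈ s, g i := by
  have hpos : #(s.filter p) • δ ≤ ∑ i ∈ s.filter p, g i :=
    card_nsmul_le_sum _ _ _ fun i hi ↦ hp i (mem_filter.1 hi).1 (mem_filter.1 hi).2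
  have hneg : #(s.filter (¬ p ·)) • (-C) ≤ ∑ i ∈ s.filter (¬ p ·), g i :=
    card_nsmul_le_sum _ _ _ fun i hi ↦ hnp i (mem_filter.1 hi).1 (mem_filter.1 hi).2
  rw [← sum_filter_add_sum_filter_not s p]
  simp only [nsmul_eq_mul] at hpos hneg
  linarith

theorem secure_members_outvote_general {X : Type*} [NormedAddCommGroup X]
    [NormedSpace ℝ X] {M N : ℕ}
    (f : Fin N → X → Fin M → ℝ) (fen : X → Fin M → ℝ)
    (hfen : ∀ x j, fen x j = (1 / (N : ℝ)) * ∑ n, f n x j)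
    (x x' : X) (y : Fin M) (ε δ C : ℝ)
    (hx' : x' ∈ ballSet x ε) (k : ℕ)
    (hk : {n : Fin N | ¬ ∀ j, f n x' y ≥ f n x' j}.ncard = k)
    (hsec : ∀ n, (∀ j, f n x' y ≥ f n x' j) →
      ∀ j, j ≠ y → f n x' y - f n x' j ≥ δ)
    (hins : ∀ n, (¬ ∀ j, f n x' y ≥ f n x' j) →
      ∀ j, f n x' j - f n x' y ≤ C)
    (hbal : ((N : ℝ) - (k : ℝ)) * δ ≥ (k : ℝ) * C) :
    x' ∈ Bsecure x y fen ε := by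
  classical
  set secure : Fin N → Prop := fun n ↦ ∀ j, f n x' y ≥ f n x' j
  have hinsecure : #(univ.filter (¬ secure ·)) = k := by
    rw [← hk, Set.ncard_eq_toFinset_card']
    simp [secure]
  have hsecure : (#(univ.filter secure) : ℝ) = N - k := by
    rw [← hinsecure, eq_sub_iff_add_eq, ← Nat.cast_add, card_filter_add_card_filter_not,
      card_univ, Fintype.card_fin]
  refine ⟨hx', fun j ↦ ?_⟩
  obtain rfl | hjy := eq_or_ne j y
  · exact le_rfl
  have hmargin := card_filter_mul_sub_card_filter_not_mul_le_sum univ secure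
    (g := fun n ↦ f n x' y - f n x' j) (C := C) (fun n _ hn ↦ hsec n hn j hjy)
    (fun n _ hn ↦ by linarith [hins n hn j])
  rw [hsecure, hinsecure] at hmargin
  change fen x' j ≤ fen x' y
  rw [hfen, hfen]
  gcongr 1 / _ * ?_
  rw [← sub_nonneg, ← sum_sub_distrib]
  linarith

theorem secure_members_outvote {X : Type*} [NormedAddCommGroup X]
    [NormedSpace ℝ X] {M N : ℕ}
    (f : Fin N → X → Fin M → ℝ) (fen : X → Fin M → ℝ)
    (hfen : ∀ x j, fen x j = (1 / (N : ℝ)) * ∑ n, f n x j)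
    (x x' : X) (y : Fin M) (ε δ C : ℝ) (hδ : 0 ≤ δ) (hC : 0 ≤ C)
    (hx' : x' ∈ ballSet x ε) (k : ℕ)
    (hk : {n : Fin N | ¬ ∀ j, f n x' y ≥ f n x' j}.ncard = k)
    (hsec : ∀ n, (∀ j, f n x' y ≥ f n x' j) →
      ∀ j, j ≠ y → f n x' y - f n x' j ≥ δ)
    (hins : ∀ n, (¬ ∀ j, f n x' y ≥ f n x' j) →
      ∀ j, f n x' j - f n x' y ≤ C)
    (hbal : ((N : ℝ) - (k : ℝ)) * δ ≥ (k : ℝ) * C) :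
    x' ∈ Bsecure x y fen ε :=
  secure_members_outvote_general f fen hfen x x' y ε δ C hx' k hk hsec hins hbal
end
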